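/- arXiv:2106.02601 — 2 statements merged into one kernel-verified Lean document; each statement's English description precedes it below -/
import Mathlib

section
/- Let a = x_0 < x_1 < ... < x_{p'} = b be a partition of the interval [a,b], let f_{p'} : [a,b] → ℝ be continuous and affine on each interval I_k = [x_{k-1}, x_k] (so f_{p'} is continuous piecewise linear with p' pieces of widths h_k = x_k - x_{k-1}), and let h_max be the maximum of the widths h_k. Let f_p : [a,b] → ℝ be continuous piecewise linear with p pieces, with slope L_j on its j-th piece, where p' ≤ p. Assume that for every k ∈ {1,...,p'}: (i) the interval I_k intersects the interiors of at most two consecutive pieces of f_p, and (ii) there exists a point z ∈ I_k at which f_p(z) = f_{p'}(z) and at which f_p and f_{p'} are both differentiable with equal derivative. Then the L¹ approximation error satisfies ∫_a^b |f_p(x) - f_{p'}(x)| dx ≤ (1/2) · h_max² · Σ_{k=1}^{p-1} |L_{k+1} - L_k|. -/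
/-!
On a piece `[u, v]` of `fp'`, condition (i) leaves at most one knot `c` of `fp` inside, so
`g = fp - fp'` is affine on `[u, c]` and on `[c, v]`, with slopes differing by the jump `δ` of the
slope of `fp` at `c`. By (ii), `g` has a zero with `g' = 0` in one of the two halves, so `g`
vanishes there, and on the other half `|g y| = |δ| |y - c|`. Hence
`∫_u^v |g| ≤ |δ| ((c - u)² + (v - c)²) / 2 ≤ |δ| (v - u)² / 2`. Summing over the pieces of `fp'`,
each knot of `fp` is counted at most once.
-/

theorem HasDerivAt.eq_of_eqOn_Icc_affine {f : ℝ → ℝ} {u v z b c m d : ℝ} (huv : u < v)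
    (hz : z ∈ Set.Icc u v) (hf : ∀ y ∈ Set.Icc u v, f y = b + m * (y - c))
    (hd : HasDerivAt f d z) : d = m := by
  have haff : HasDerivWithinAt f m (Set.Icc u v) z := by
    refine HasDerivWithinAt.congr ?_ hf (hf z hz)
    simpa using ((((hasDerivAt_id z).sub_const c).const_mul m).const_add b).hasDerivWithinAt
  exact (uniqueDiffOn_Icc huv z hz).eq_deriv _ hd.hasDerivWithinAt haff

theorem affine_rebase {f : ℝ → ℝ} {s : Set ℝ} {a m c : ℝ}
    (hf : ∀ y ∈ s, f y = f a + m * (y - a)) (hc : c ∈ s) :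
    ∀ y ∈ s, f y = f c + m * (y - c) := by
  intro y hy
  rw [hf y hy, hf c hc]
  ring

theorem integral_abs_sub_const_le {u v c : ℝ} (hc : c ∈ Set.Icc u v) :
    ∫ y in u..v, |y - c| ≤ (v - u) ^ 2 / 2 := by
  have hint : ∀ r s : ℝ, IntervalIntegrable (fun y => |y - c|) MeasureTheory.volume r s :=
    fun r s => (by fun_prop : Continuous fun y : ℝ => |y - c|).intervalIntegrable r s
  have hleft : ∫ y in u..c, |y - c| = (c - u) ^ 2 / 2 := by
    rw [intervalIntegral.integral_congr (g := fun y => c - y)]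
    · rw [intervalIntegral.integral_comp_sub_left (fun y => y)]; simp
    · intro y hy
      rw [Set.uIcc_of_le hc.1] at hy
      dsimp only
      rw [abs_sub_comm, abs_of_nonneg (sub_nonneg.2 hy.2)]
  have hright : ∫ y in c..v, |y - c| = (v - c) ^ 2 / 2 := by
    rw [intervalIntegral.integral_congr (g := fun y => y - c)]
    · rw [intervalIntegral.integral_comp_sub_right (fun y => y)]; simp
    · intro y hy
      rw [Set.uIcc_of_le hc.2] at hy
      dsimp only
      rw [abs_of_nonneg (sub_nonneg.2 hy.1)]
  rw [← intervalIntegral.integral_add_adjacent_intervals (hint u c) (hint c v), hleft, hright]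
  nlinarith [mul_nonneg (sub_nonneg.2 hc.1) (sub_nonneg.2 hc.2)]

theorem abs_le_abs_sub_mul_of_two_affine_pieces {g : ℝ → ℝ} {u c v α β z : ℝ}
    (huv : u < v) (hc : c ∈ Set.Icc u v)
    (hα : ∀ y ∈ Set.Icc u c, g y = g c + α * (y - c))
    (hβ : ∀ y ∈ Set.Icc c v, g y = g c + β * (y - c))
    (hz : z ∈ Set.Icc u v) (hgz : g z = 0) (hg'z : HasDerivAt g 0 z) :
    ∀ y ∈ Set.Icc u v, |g y| ≤ |β - α| * |y - c| := by
  have flat : ∀ {r s m : ℝ}, r < s → z ∈ Set.Icc r s →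
      (∀ y ∈ Set.Icc r s, g y = g c + m * (y - c)) → g c = 0 ∧ m = 0 := by
    intro r s m hrs hzrs hm
    have hm0 := (hg'z.eq_of_eqOn_Icc_affine hrs hzrs hm).symm
    have := hm z hzrs
    rw [hgz, hm0] at this
    exact ⟨by linarith, hm0⟩
  -- a piece of positive length contains `z`, and there `g` is affine with slope `g' z = 0`
  obtain ⟨hgc, hαβ⟩ : g c = 0 ∧ (α = 0 ∨ β = 0) := by
    rcases le_or_gt z c with hzc | hcz
    · rcases hc.1.lt_or_eq with huc | rfl
      · exact (flat huc ⟨hz.1, hzc⟩ hα).imp_right .inl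
      · exact (flat huv ⟨hz.1, hz.2⟩ hβ).imp_right .inr
    · exact (flat (hcz.trans_le hz.2) ⟨hcz.le, hz.2⟩ hβ).imp_right .inr
  intro y hy
  rcases le_total y c with hyc | hcy
  · rw [hα y ⟨hy.1, hyc⟩, hgc, zero_add, abs_mul]
    rcases hαβ with h | h <;> simp [h, mul_nonneg]
  · rw [hβ y ⟨hcy, hy.2⟩, hgc, zero_add, abs_mul]
    rcases hαβ with h | h <;> simp [h, mul_nonneg]

theorem integral_abs_le_of_two_affine_pieces {g : ℝ → ℝ} {u c v α β z : ℝ}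
    (huv : u < v) (hc : c ∈ Set.Icc u v) (hg : ContinuousOn g (Set.Icc u v))
    (hα : ∀ y ∈ Set.Icc u c, g y = g c + α * (y - c))
    (hβ : ∀ y ∈ Set.Icc c v, g y = g c + β * (y - c))
    (hz : z ∈ Set.Icc u v) (hgz : g z = 0) (hg'z : HasDerivAt g 0 z) :
    ∫ y in u..v, |g y| ≤ |β - α| * ((v - u) ^ 2 / 2) := calc
  ∫ y in u..v, |g y| ≤ ∫ y in u..v, |β - α| * |y - c| := by
    refine intervalIntegral.integral_mono_on huv.le ?_ ?_
      (abs_le_abs_sub_mul_of_two_affine_pieces huv hc hα hβ hz hgz hg'z)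
    · exact hg.abs.intervalIntegrable_of_Icc huv.le
    · exact (by fun_prop : Continuous fun y => |β - α| * |y - c|).intervalIntegrable u v
  _ ≤ |β - α| * ((v - u) ^ 2 / 2) := by
    rw [intervalIntegral.integral_const_mul]
    exact mul_le_mul_of_nonneg_left (integral_abs_sub_const_le hc) (abs_nonneg _)

theorem exists_pieces_covering_Icc {p : ℕ} {t : ℕ → ℝ} (ht : ∀ j < p, t j < t (j + 1))
    {u v : ℝ} (huv : u < v) (hu : t 0 ≤ u) (hv : v ≤ t p)
    (htwo : ∃ J, ∀ m, 1 ≤ m → m ≤ p →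
      (Set.Ioo (t (m - 1)) (t m) ∩ Set.Icc u v).Nonempty → m = J ∨ m = J + 1) :
    (∃ j, 1 ≤ j ∧ j ≤ p ∧ t (j - 1) ≤ u ∧ v ≤ t j) ∨
      ∃ j, 1 ≤ j ∧ j < p ∧ t (j - 1) ≤ u ∧ t j ∈ Set.Ioo u v ∧ v ≤ t (j + 1) := by
  obtain ⟨J, hJ⟩ := htwo
  have meets : ∀ m < p, t m < v → u < t (m + 1) → m + 1 = J ∨ m + 1 = J + 1 := by
    intro m hmp hl hr
    refine hJ (m + 1) (by omega) hmp ?_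
    rw [Nat.add_sub_cancel]
    have hmn : max (t m) u < min (t (m + 1)) v :=
      lt_min (max_lt (ht m hmp) hr) (max_lt hl huv)
    exact ⟨(max (t m) u + min (t (m + 1)) v) / 2,
      ⟨by linarith [le_max_left (t m) u], by linarith [min_le_left (t (m + 1)) v]⟩,
      by linarith [le_max_right (t m) u], by linarith [min_le_right (t (m + 1)) v]⟩
  have hex : ∃ j, v ≤ t j := ⟨p, hv⟩
  obtain ⟨i, hvi, hip, hiv⟩ : ∃ i, v ≤ t (i + 1) ∧ i < p ∧ t i < v := by
    obtain ⟨i, hi⟩ : ∃ i, Nat.find hex = i + 1 :=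
      Nat.exists_eq_succ_of_ne_zero fun h => by linarith [h ▸ Nat.find_spec hex]
    exact ⟨i, hi ▸ Nat.find_spec hex, by have : Nat.find hex ≤ p := Nat.find_le hv; omega,
      not_le.1 (Nat.find_min hex (by omega))⟩
  by_cases hiu : t i ≤ u
  · exact .inl ⟨i + 1, by omega, hip, by simpa using hiu, hvi⟩
  push Not at hiu
  obtain ⟨k, rfl⟩ : ∃ k, i = k + 1 :=
    Nat.exists_eq_succ_of_ne_zero fun h => by subst h; linarith
  refine .inr ⟨k + 1, by omega, hip, ?_, ⟨hiu, hiv⟩, hvi⟩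
  by_contra! hku
  obtain ⟨l, rfl⟩ : ∃ l, k = l + 1 :=
    Nat.exists_eq_succ_of_ne_zero fun h => by subst h; linarith
  have := meets (l + 2) hip hiv (hiu.trans (ht (l + 2) hip))
  have := meets (l + 1) (by omega) ((ht (l + 1) (by omega)).trans hiv) hiu
  have := meets l (by omega) ((ht l (by omega)).trans ((ht (l + 1) (by omega)).trans hiv)) hku
  omega

theorem sum_sum_filter_mem_Ioo_le {ι : Type*} (S : Finset ι) (s w : ι → ℝ)
    (hw : ∀ i ∈ S, 0 ≤ w i) {x : ℕ → ℝ} {n : ℕ} (hx : MonotoneOn x (Set.Iic n)) :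
    ∑ k ∈ Finset.range n, ∑ i ∈ S with s i ∈ Set.Ioo (x k) (x (k + 1)), w i ≤
      ∑ i ∈ S, w i := by
  classical
  have hdisj : (Finset.range n : Set ℕ).PairwiseDisjoint
      fun k => {i ∈ S | s i ∈ Set.Ioo (x k) (x (k + 1))} := by
    intro k hk l hl hkl
    simp only [Finset.coe_range, Set.mem_Iio] at hk hl
    refine Finset.disjoint_filter.2 fun i _ hik hil => ?_
    rcases hkl.lt_or_gt with h | h
    · linarith [hik.2, hil.1, hx (by simp; omega) (by simp; omega) (Nat.succ_le_of_lt h)]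
    · linarith [hik.1, hil.2, hx (by simp; omega) (by simp; omega) (Nat.succ_le_of_lt h)]
  rw [← Finset.sum_biUnion hdisj]
  exact Finset.sum_le_sum_of_subset_of_nonneg
    (Finset.biUnion_subset.2 fun _ _ => Finset.filter_subset _ _) fun i hi _ => hw i hi

theorem integral_abs_sub_le_of_touching {p : ℕ} {t L : ℕ → ℝ}
    (ht : ∀ j < p, t j < t (j + 1)) {fp fp' : ℝ → ℝ} {u v M w : ℝ}
    (huv : u < v) (hw : v - u ≤ w) (hu : t 0 ≤ u) (hv : v ≤ t p)
    (hfpc : ContinuousOn fp (Set.Icc u v)) (hfp'c : ContinuousOn fp' (Set.Icc u v))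
    (hfpaff : ∀ j, 1 ≤ j → j ≤ p →
      ∀ y ∈ Set.Icc (t (j - 1)) (t j), fp y = fp (t (j - 1)) + L j * (y - t (j - 1)))
    (hfp'aff : ∀ y ∈ Set.Icc u v, fp' y = fp' u + M * (y - u))
    (htwo : ∃ J, ∀ m, 1 ≤ m → m ≤ p →
      (Set.Ioo (t (m - 1)) (t m) ∩ Set.Icc u v).Nonempty → m = J ∨ m = J + 1)
    (htouch : ∃ z ∈ Set.Icc u v, fp z = fp' z ∧
      ∃ d : ℝ, HasDerivAt fp d z ∧ HasDerivAt fp' d z) :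
    ∫ y in u..v, |fp y - fp' y| ≤
      (1 / 2) * w ^ 2 *
        ∑ j ∈ Finset.Icc 1 (p - 1) with t j ∈ Set.Ioo u v, |L (j + 1) - L j| := by
  obtain ⟨c, hc, α, β, hα, hβ, hαβ⟩ : ∃ c ∈ Set.Icc u v, ∃ α β : ℝ,
      (∀ y ∈ Set.Icc u c, fp y = fp c + α * (y - c)) ∧
      (∀ y ∈ Set.Icc c v, fp y = fp c + β * (y - c)) ∧
      |β - α| ≤ ∑ j ∈ Finset.Icc 1 (p - 1) with t j ∈ Set.Ioo u v, |L (j + 1) - L j| := by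
    rcases exists_pieces_covering_Icc ht huv hu hv htwo with
      ⟨j, hj1, hjp, hju, hvj⟩ | ⟨j, hj1, hjp, hju, hjuv, hvj⟩
    · have hsub : Set.Icc u v ⊆ Set.Icc (t (j - 1)) (t j) := Set.Icc_subset_Icc hju hvj
      have hfu := affine_rebase (hfpaff j hj1 hjp) (hsub (Set.left_mem_Icc.2 huv.le))
      refine ⟨u, Set.left_mem_Icc.2 huv.le, L j, L j, fun y hy => hfu y (hsub ⟨hy.1, ?_⟩),
        fun y hy => hfu y (hsub hy), by simp only [sub_self, abs_zero]; positivity⟩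
      linarith [hy.2]
    · have htj : t (j - 1) ≤ t j := by
        simpa [Nat.sub_add_cancel hj1] using (ht (j - 1) (by omega)).le
      have hleft := affine_rebase (hfpaff j hj1 hjp.le) (Set.right_mem_Icc.2 htj)
      have hright := hfpaff (j + 1) (by omega) hjp
      simp only [Nat.add_sub_cancel] at hright
      refine ⟨t j, ⟨hjuv.1.le, hjuv.2.le⟩, L j, L (j + 1),
        fun y hy => hleft y ⟨hju.trans hy.1, hy.2⟩,
        fun y hy => hright y ⟨hy.1, hy.2.trans hvj⟩, ?_⟩
      exact Finset.single_le_sum (f := fun j => |L (j + 1) - L j|) (fun _ _ => abs_nonneg _)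
        (Finset.mem_filter.2 ⟨Finset.mem_Icc.2 ⟨hj1, by omega⟩, hjuv⟩)
  obtain ⟨z, hz, hfz, d, hd, hd'⟩ := htouch
  have hfp'c' := affine_rebase hfp'aff hc
  calc ∫ y in u..v, |fp y - fp' y|
      ≤ |(β - M) - (α - M)| * ((v - u) ^ 2 / 2) := by
        refine integral_abs_le_of_two_affine_pieces huv hc (hfpc.sub hfp'c) (fun y hy => ?_)
          (fun y hy => ?_) hz (sub_eq_zero.2 hfz) (by rw [← sub_self d]; exact hd.sub hd')
        · rw [hα y hy, hfp'c' y ⟨hy.1, hy.2.trans hc.2⟩]; ring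
        · rw [hβ y hy, hfp'c' y ⟨hc.1.trans hy.1, hy.2⟩]; ring
    _ = (1 / 2) * (v - u) ^ 2 * |β - α| := by rw [sub_sub_sub_cancel_right]; ring
    _ ≤ _ := by gcongr

theorem l1_error_piecewise_linear_approx_general
    (a b : ℝ) (p p' : ℕ) (hp'pos : 1 ≤ p')
    (x t : ℕ → ℝ)
    (hx0 : x 0 = a) (hxlast : x p' = b)
    (ht0 : t 0 = a) (htlast : t p = b)
    (hxmono : ∀ k < p', x k < x (k + 1))
    (htmono : ∀ j < p, t j < t (j + 1))
    (fp fp' : ℝ → ℝ) (L M : ℕ → ℝ)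
    (hfpcont : ContinuousOn fp (Set.Icc a b))
    (hfp'cont : ContinuousOn fp' (Set.Icc a b))
    -- `fp'` is affine with slope `M k` on its `k`-th piece `[x (k-1), x k]`
    (hfp'aff : ∀ k, 1 ≤ k → k ≤ p' →
      ∀ y ∈ Set.Icc (x (k - 1)) (x k),
        fp' y = fp' (x (k - 1)) + M k * (y - x (k - 1)))
    -- `fp` is affine with slope `L j` on its `j`-th piece `[t (j-1), t j]`
    (hfpaff : ∀ j, 1 ≤ j → j ≤ p →
      ∀ y ∈ Set.Icc (t (j - 1)) (t j),
        fp y = fp (t (j - 1)) + L j * (y - t (j - 1)))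
    -- widths of the pieces of `fp'` and their maximum
    (h : ℕ → ℝ) (hwidth : ∀ k, h k = x k - x (k - 1))
    (hmax : ℝ)
    (hmax_def : hmax = (Finset.Icc 1 p').sup' (Finset.nonempty_Icc.mpr hp'pos) h)
    -- (i) each `I_k` meets the interiors of at most two consecutive pieces of `fp`
    (hconsec : ∀ k, 1 ≤ k → k ≤ p' → ∃ j, ∀ m, 1 ≤ m → m ≤ p →
      (Set.Ioo (t (m - 1)) (t m) ∩ Set.Icc (x (k - 1)) (x k)).Nonempty →
        m = j ∨ m = j + 1)
    -- (ii) on each `I_k`, `fp` and `fp'` agree in value and derivative at some point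
    (htouch : ∀ k, 1 ≤ k → k ≤ p' → ∃ z ∈ Set.Icc (x (k - 1)) (x k),
      fp z = fp' z ∧ ∃ d : ℝ, HasDerivAt fp d z ∧ HasDerivAt fp' d z) :
    ∫ y in a..b, |fp y - fp' y| ≤
      (1 / 2) * hmax ^ 2 * ∑ k ∈ Finset.Icc 1 (p - 1), |L (k + 1) - L k| := by
  have hx : MonotoneOn x (Set.Iic p') := (strictMonoOn_Iic_of_lt_succ hxmono).monotoneOn
  have hIcc : ∀ k < p', Set.Icc (x k) (x (k + 1)) ⊆ Set.Icc a b := fun k hk =>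
    Set.Icc_subset_Icc (hx0 ▸ hx (by simp) (by simp; omega) (by omega))
      (hxlast ▸ hx (by simp; omega) (by simp) (by omega))
  have hwidth_le : ∀ k < p', x (k + 1) - x k ≤ hmax := by
    intro k hk
    have := Finset.le_sup' h (Finset.mem_Icc.2 ⟨Nat.le_add_left 1 k, hk⟩)
    rwa [← hmax_def, hwidth, Nat.add_sub_cancel] at this
  have hpiece : ∀ k ∈ Finset.range p', ∫ y in x k..x (k + 1), |fp y - fp' y| ≤
      (1 / 2) * hmax ^ 2 *
        ∑ j ∈ Finset.Icc 1 (p - 1) with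
          t j ∈ Set.Ioo (x k) (x (k + 1)), |L (j + 1) - L j| := by
    intro k hk
    rw [Finset.mem_range] at hk
    exact integral_abs_sub_le_of_touching htmono (hxmono k hk) (hwidth_le k hk)
      (ht0 ▸ (hIcc k hk (Set.left_mem_Icc.2 (hxmono k hk).le)).1)
      (htlast ▸ (hIcc k hk (Set.right_mem_Icc.2 (hxmono k hk).le)).2)
      (hfpcont.mono (hIcc k hk)) (hfp'cont.mono (hIcc k hk)) hfpaff
      (by simpa using hfp'aff (k + 1) (by omega) (by omega))
      (by simpa using hconsec (k + 1) (by omega) (by omega))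
      (by simpa using htouch (k + 1) (by omega) (by omega))
  have hint : ∀ k < p', IntervalIntegrable (fun y => |fp y - fp' y|) MeasureTheory.volume
      (x k) (x (k + 1)) := fun k hk =>
    ((hfpcont.sub hfp'cont).abs.mono (hIcc k hk)).intervalIntegrable_of_Icc (hxmono k hk).le
  calc ∫ y in a..b, |fp y - fp' y|
      = ∑ k ∈ Finset.range p', ∫ y in x k..x (k + 1), |fp y - fp' y| := by
        rw [← hx0, ← hxlast, intervalIntegral.sum_integral_adjacent_intervals hint]
    _ ≤ (1 / 2) * hmax ^ 2 * ∑ k ∈ Finset.range p', ∑ j ∈ Finset.Icc 1 (p - 1) with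
          t j ∈ Set.Ioo (x k) (x (k + 1)), |L (j + 1) - L j| := by
        rw [Finset.mul_sum]
        exact Finset.sum_le_sum hpiece
    _ ≤ _ := by
        gcongr
        exact sum_sum_filter_mem_Ioo_le _ _ _ (fun _ _ => abs_nonneg _) hx

/-- **Theorem 2 (L¹ approximation of a piecewise linear function by a coarser
piecewise linear function).**

Let `a = x 0 < x 1 < ⋯ < x p' = b` be a partition of `[a,b]`, let `fp'` be
continuous on `[a,b]` and affine with slope `M k` on each piece
`I_k = [x (k-1), x k]` (widths `h k = x k - x (k-1)`, maximal width `hmax`).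
Let `fp` be continuous piecewise linear on `[a,b]` with `p ≥ p'` pieces
determined by the partition `a = t 0 < t 1 < ⋯ < t p = b`, with slope `L j`
on its `j`-th piece.  Assume that for every `k ∈ {1,…,p'}`:
(i) the interval `I_k` meets the interiors of at most two consecutive pieces
of `fp`, and (ii) there is a point `z ∈ I_k` at which `fp z = fp' z` and both
functions are differentiable with equal derivative.  Then
`∫_a^b |fp - fp'| ≤ (1/2) * hmax² * ∑_{k=1}^{p-1} |L (k+1) - L k|`. -/
theorem l1_error_piecewise_linear_approx
    (a b : ℝ) (p p' : ℕ) (hp'pos : 1 ≤ p') (hp'p : p' ≤ p)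
    (x t : ℕ → ℝ)
    (hx0 : x 0 = a) (hxlast : x p' = b)
    (ht0 : t 0 = a) (htlast : t p = b)
    (hxmono : ∀ k < p', x k < x (k + 1))
    (htmono : ∀ j < p, t j < t (j + 1))
    (fp fp' : ℝ → ℝ) (L M : ℕ → ℝ)
    (hfpcont : ContinuousOn fp (Set.Icc a b))
    (hfp'cont : ContinuousOn fp' (Set.Icc a b))
    -- `fp'` is affine with slope `M k` on its `k`-th piece `[x (k-1), x k]`
    (hfp'aff : ∀ k, 1 ≤ k → k ≤ p' →
      ∀ y ∈ Set.Icc (x (k - 1)) (x k),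
        fp' y = fp' (x (k - 1)) + M k * (y - x (k - 1)))
    -- `fp` is affine with slope `L j` on its `j`-th piece `[t (j-1), t j]`
    (hfpaff : ∀ j, 1 ≤ j → j ≤ p →
      ∀ y ∈ Set.Icc (t (j - 1)) (t j),
        fp y = fp (t (j - 1)) + L j * (y - t (j - 1)))
    -- widths of the pieces of `fp'` and their maximum
    (h : ℕ → ℝ) (hwidth : ∀ k, h k = x k - x (k - 1))
    (hmax : ℝ)
    (hmax_def : hmax = (Finset.Icc 1 p').sup' (Finset.nonempty_Icc.mpr hp'pos) h)
    -- (i) each `I_k` meets the interiors of at most two consecutive pieces of `fp`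
    (hconsec : ∀ k, 1 ≤ k → k ≤ p' → ∃ j, ∀ m, 1 ≤ m → m ≤ p →
      (Set.Ioo (t (m - 1)) (t m) ∩ Set.Icc (x (k - 1)) (x k)).Nonempty →
        m = j ∨ m = j + 1)
    -- (ii) on each `I_k`, `fp` and `fp'` agree in value and derivative at some point
    (htouch : ∀ k, 1 ≤ k → k ≤ p' → ∃ z ∈ Set.Icc (x (k - 1)) (x k),
      fp z = fp' z ∧ ∃ d : ℝ, HasDerivAt fp d z ∧ HasDerivAt fp' d z) :
    ∫ y in a..b, |fp y - fp' y| ≤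
      (1 / 2) * hmax ^ 2 * ∑ k ∈ Finset.Icc 1 (p - 1), |L (k + 1) - L k| :=
  l1_error_piecewise_linear_approx_general a b p p' hp'pos x t hx0 hxlast ht0 htlast hxmono htmono
    fp fp' L M hfpcont hfp'cont hfp'aff hfpaff h hwidth hmax hmax_def hconsec htouch
end

section
/- Let c ≤ t ≤ d be real numbers, let f : [c,d] → ℝ be continuous, affine with slope L on [c,t] and affine with slope L' on [t,d], and let g : [c,d] → ℝ be affine. Suppose there exists a point z ∈ [c,d] such that f(z) = g(z) and the slope of g equals the slope of the piece of f whose interval contains z. Then the L¹ error on [c,d] satisfies ∫_c^d |f(x) - g(x)| dx ≤ (1/2) · (d - c)² · |L' - L|. -/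
/-!
Writing `x⁺ = max x 0`, a two-piece function is `f t + L (x - t) + (L' - L) (x - t)⁺`,
and equally `f t + L' (x - t) + (L' - L) (t - x)⁺`. If `g` is affine with slope `L` (resp. `L'`)
and meets `f` at `z`, the affine parts cancel in `f - g`, which is then `L' - L` times the
difference of a `1`-Lipschitz function at `x` and at `z`. Hence `|f x - g x| ≤ |L' - L| |x - z|`,
and `∫_c^d |x - z| dx = ((z - c)² + (d - z)²) / 2 ≤ (d - c)² / 2`.
-/

open Set intervalIntegral
open scoped Interval

section TwoPiece

variable {f : ℝ → ℝ} {c t d L L' : ℝ}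

theorem eq_add_mul_max_sub_of_two_piece (hf1 : ∀ x ∈ Icc c t, f x = f c + L * (x - c))
    (hf2 : ∀ x ∈ Icc t d, f x = f t + L' * (x - t)) {x : ℝ} (hx : x ∈ Icc c d) :
    f x = f t + L * (x - t) + (L' - L) * max (x - t) 0 := by
  rcases le_total x t with hxt | htx
  · rw [hf1 x ⟨hx.1, hxt⟩, hf1 t ⟨hx.1.trans hxt, le_rfl⟩, max_eq_right (sub_nonpos.2 hxt)]
    ring
  · rw [hf2 x ⟨htx, hx.2⟩, max_eq_left (sub_nonneg.2 htx)]
    ring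

theorem eq_add_mul_max_sub_of_two_piece' (hf1 : ∀ x ∈ Icc c t, f x = f c + L * (x - c))
    (hf2 : ∀ x ∈ Icc t d, f x = f t + L' * (x - t)) {x : ℝ} (hx : x ∈ Icc c d) :
    f x = f t + L' * (x - t) + (L' - L) * max (t - x) 0 := by
  rcases le_total x t with hxt | htx
  · rw [hf1 x ⟨hx.1, hxt⟩, hf1 t ⟨hx.1.trans hxt, le_rfl⟩, max_eq_left (sub_nonneg.2 hxt)]
    ring
  · rw [hf2 x ⟨htx, hx.2⟩, max_eq_right (sub_nonpos.2 htx)]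
    ring

theorem continuousOn_of_two_piece (hf1 : ∀ x ∈ Icc c t, f x = f c + L * (x - c))
    (hf2 : ∀ x ∈ Icc t d, f x = f t + L' * (x - t)) : ContinuousOn f (Icc c d) :=
  (by fun_prop : Continuous fun x => f t + L * (x - t) + (L' - L) * max (x - t) 0)
    |>.continuousOn.congr fun _ hx => eq_add_mul_max_sub_of_two_piece hf1 hf2 hx

theorem abs_sub_le_of_two_piece {g : ℝ → ℝ} {Lg z : ℝ}
    (hf1 : ∀ x ∈ Icc c t, f x = f c + L * (x - c))
    (hf2 : ∀ x ∈ Icc t d, f x = f t + L' * (x - t))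
    (hg : ∀ x ∈ Icc c d, g x = g c + Lg * (x - c)) (hz : z ∈ Icc c d) (hfz : f z = g z)
    (hLg : Lg = L ∨ Lg = L') {x : ℝ} (hx : x ∈ Icc c d) :
    |f x - g x| ≤ |L' - L| * |x - z| := by
  have hgx := hg x hx
  have hgz := hg z hz
  rcases hLg with hL | hL <;> subst Lg
  · have hfx := eq_add_mul_max_sub_of_two_piece hf1 hf2 hx
    have hfz' := eq_add_mul_max_sub_of_two_piece hf1 hf2 hz
    calc |f x - g x| = |L' - L| * |max (x - t) 0 - max (z - t) 0| := by
          rw [← abs_mul]; congr 1; linear_combination hfx - hfz' - hgx + hgz + hfz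
      _ ≤ |L' - L| * |x - z| := by
          refine mul_le_mul_of_nonneg_left ?_ (abs_nonneg _)
          simpa using abs_max_sub_max_le_abs (x - t) (z - t) 0
  · have hfx := eq_add_mul_max_sub_of_two_piece' hf1 hf2 hx
    have hfz' := eq_add_mul_max_sub_of_two_piece' hf1 hf2 hz
    calc |f x - g x| = |L' - L| * |max (t - x) 0 - max (t - z) 0| := by
          rw [← abs_mul]; congr 1; linear_combination hfx - hfz' - hgx + hgz + hfz
      _ ≤ |L' - L| * |x - z| := by
          refine mul_le_mul_of_nonneg_left ?_ (abs_nonneg _)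
          simpa [abs_sub_comm] using abs_max_sub_max_le_abs (t - x) (t - z) 0

end TwoPiece

theorem integral_abs_sub_of_mem_Icc {c d z : ℝ} (hz : z ∈ Icc c d) :
    ∫ x in c..d, |x - z| = ((z - c) ^ 2 + (d - z) ^ 2) / 2 := by
  have hint : ∀ a b, IntervalIntegrable (fun x => |x - z|) MeasureTheory.volume a b :=
    fun a b => (by fun_prop : Continuous fun x => |x - z|).intervalIntegrable a b
  have hhalf : ∀ b, ∫ x in Ι z b, |x - z| = (b - z) ^ 2 / 2 := fun b => by
    simpa [one_add_one_eq_two] using integral_pow_abs_sub_uIoc (a := z) (b := b) (n := 1)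
  rw [← integral_add_adjacent_intervals (hint c z) (hint z d), integral_of_le hz.1,
    integral_of_le hz.2, ← uIoc_of_ge hz.1, ← uIoc_of_le hz.2, hhalf, hhalf]
  ring

theorem l1_error_two_piece_affine_general
    (c t d : ℝ)
    (f g : ℝ → ℝ) (L L' Lg : ℝ)
    (hf1 : ∀ x ∈ Set.Icc c t, f x = f c + L * (x - c))
    (hf2 : ∀ x ∈ Set.Icc t d, f x = f t + L' * (x - t))
    (hg : ∀ x ∈ Set.Icc c d, g x = g c + Lg * (x - c))
    (hz : ∃ z ∈ Set.Icc c d, f z = g z ∧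
      ((z ∈ Set.Icc c t ∧ Lg = L) ∨ (z ∈ Set.Icc t d ∧ Lg = L'))) :
    ∫ x in c..d, |f x - g x| ≤ (1/2) * (d - c)^2 * |L' - L| := by
  obtain ⟨z, hz, hfz, hLg⟩ := hz
  have hcd : c ≤ d := hz.1.trans hz.2
  have hgcont : ContinuousOn g (Icc c d) :=
    (by fun_prop : Continuous fun x => g c + Lg * (x - c)).continuousOn.congr hg
  have hint : IntervalIntegrable (fun x => |f x - g x|) MeasureTheory.volume c d :=
    ((continuousOn_of_two_piece hf1 hf2).sub hgcont).abs.intervalIntegrable_of_Icc hcd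
  calc ∫ x in c..d, |f x - g x| ≤ ∫ x in c..d, |L' - L| * |x - z| :=
        integral_mono_on hcd hint
          ((by fun_prop : Continuous fun x => |L' - L| * |x - z|).intervalIntegrable c d)
          fun x hx => abs_sub_le_of_two_piece hf1 hf2 hg hz hfz (hLg.imp And.right And.right) hx
    _ = |L' - L| * (((z - c) ^ 2 + (d - z) ^ 2) / 2) := by
        rw [integral_const_mul, integral_abs_sub_of_mem_Icc hz]
    _ ≤ (1/2) * (d - c)^2 * |L' - L| := by
        have hcross := mul_nonneg (sub_nonneg.2 hz.1) (sub_nonneg.2 hz.2)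
        nlinarith [mul_nonneg (abs_nonneg (L' - L)) hcross]

/-- **L¹ error bound for approximating a two-piece continuous piecewise
linear function by an affine function.**

Let `c ≤ t ≤ d`, let `f` be continuous on `[c,d]`, affine with slope `L` on
`[c,t]` and affine with slope `L'` on `[t,d]`, and let `g` be affine on
`[c,d]` with slope `Lg`.  Suppose there is a point `z ∈ [c,d]` at which
`f z = g z` and the slope of `g` equals the slope of the piece of `f` whose
interval contains `z`.  Then
`∫_c^d |f x - g x| dx ≤ (1/2) * (d - c)² * |L' - L|`. -/
theorem l1_error_two_piece_affine
    (c t d : ℝ) (hct : c ≤ t) (htd : t ≤ d)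
    (f g : ℝ → ℝ) (L L' Lg : ℝ)
    (hfcont : ContinuousOn f (Set.Icc c d))
    (hf1 : ∀ x ∈ Set.Icc c t, f x = f c + L * (x - c))
    (hf2 : ∀ x ∈ Set.Icc t d, f x = f t + L' * (x - t))
    (hg : ∀ x ∈ Set.Icc c d, g x = g c + Lg * (x - c))
    (hz : ∃ z ∈ Set.Icc c d, f z = g z ∧
      ((z ∈ Set.Icc c t ∧ Lg = L) ∨ (z ∈ Set.Icc t d ∧ Lg = L'))) :
    ∫ x in c..d, |f x - g x| ≤ (1/2) * (d - c)^2 * |L' - L| :=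
  l1_error_two_piece_affine_general c t d f g L L' Lg hf1 hf2 hg hz
end
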